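/- arXiv:math-ph/9909013 — 2 statements merged into one kernel-verified Lean document; each statement's English description precedes it below -/
import Mathlib

section
/- Let V, W be partial isometries on a Hilbert space H with V² = W² = 0, such that V, V* each commute with W, W*. Set A₃ = [V,V*], B₃ = [W,W*], E = V*V + VV*, F = W*W + WW*, and let R = (1/2)[A₁(B₁+B₂) + A₂(B₁−B₂)] with A₁ = V+V*, A₂ = i(V*−V), B₁ = W+W*, B₂ = i(W*−W). If y is a unit vector in the range of (VV*)(WW*), then R²y = 2y. -/
/-!
Expanding `R` in `V, W` leaves `R = (1 - i) X + (1 + i) X*` with `X = VW`, and `X² = V²W² = 0` once `V`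
commutes with `W`. Hence `R² = 2 (XX* + X*X)`, where `XX* = (VV*)(WW*)` fixes `y` and `X*X y = 0`
because `Wy = W(VV*)(WW*)y = (VV*)W²W*y = 0`.
-/

open ContinuousLinearMap Complex

section BellOperator

variable {A : Type*} [Ring A] [StarRing A]

theorem mul_projections_eq_zero {v w : A} (hw : w * w = 0) (hvw : Commute v w)
    (hv'w : Commute (star v) w) : w * (v * star v * (w * star w)) = 0 := by
  rw [← mul_assoc, (hvw.symm.mul_right hv'w.symm).eq, mul_assoc, ← mul_assoc w, hw, zero_mul,
    mul_zero]

variable [Algebra ℂ A]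

noncomputable def bellOperator (v w : A) : A :=
  (1 / 2 : ℂ) • ((v + star v) * ((w + star w) + I • (star w - w))
    + (I • (star v - v)) * ((w + star w) - I • (star w - w)))

theorem bellOperator_eq (v w : A) :
    bellOperator v w = (1 - I) • (v * w) + (1 + I) • (star v * star w) := by
  simp only [bellOperator, mul_add, add_mul, mul_sub, sub_mul, smul_mul_assoc, mul_smul_comm,
    smul_add, smul_sub, smul_smul]
  match_scalars <;> ring_nf <;> simp [I_sq] <;> ring

omit [StarRing A] in
theorem sq_smul_add_smul_of_mul_self_eq_zero {x x' : A} (hx : x * x = 0) (hx' : x' * x' = 0) :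
    ((1 - I) • x + (1 + I) • x') ^ 2 = (2 : ℂ) • (x * x' + x' * x) := by
  simp only [sq, mul_add, add_mul, smul_mul_assoc, mul_smul_comm, smul_smul, hx, hx', smul_zero,
    zero_add, add_zero, smul_add]
  match_scalars <;> ring_nf <;> simp [I_sq] <;> ring

theorem bellOperator_sq {v w : A} (hw : w * w = 0) (hvw : Commute v w) :
    bellOperator v w ^ 2 = (2 : ℂ) • (v * w * (star v * star w) + star v * star w * (v * w)) := by
  have hX : v * w * (v * w) = 0 := by
    rw [mul_assoc, ← mul_assoc w, ← hvw.eq, mul_assoc, hw, mul_zero, mul_zero]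
  have hX' : star v * star w * (star v * star w) = 0 := by
    rw [← star_mul, ← hvw.eq, ← star_mul, hX, star_zero]
  rw [bellOperator_eq, sq_smul_add_smul_of_mul_self_eq_zero hX hX']

end BellOperator

theorem stmt2_general {H : Type*} [NormedAddCommGroup H] [InnerProductSpace ℂ H] [CompleteSpace H]
    (V W : H →L[ℂ] H)
    (hW2 : W * W = 0)
    (hc1 : V * W = W * V)
    (hc3 : adjoint V * W = W * adjoint V)
    (y : H)
    (hrange : ((V * adjoint V) * (W * adjoint W)) y = y) :
    ((((1 : ℂ)/2) • ((V + adjoint V) * ((W + adjoint W) + Complex.I • (adjoint W - W))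
        + (Complex.I • (adjoint V - V)) * ((W + adjoint W) - Complex.I • (adjoint W - W)))) ^ 2) y
      = (2 : ℂ) • y := by
  simp only [← star_eq_adjoint] at hc3 hrange ⊢
  have hWy : W y = 0 := by
    rw [← hrange, ← mul_apply_eq_comp W, mul_projections_eq_zero hW2 hc1 hc3, zero_apply]
  change (bellOperator V W ^ 2) y = _
  rw [bellOperator_sq hW2 hc1, Commute.mul_mul_mul_comm (Commute.symm hc3) V (star W)]
  simp only [smul_apply, add_apply, mul_apply_eq_comp, hrange, hWy, map_zero, add_zero]

/-- Let `V, W` be partial isometries with `V² = W² = 0`, with `V, V*`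
commuting with `W, W*`. With `A₁ = V+V*`, `A₂ = i(V*−V)`, `B₁ = W+W*`, `B₂ = i(W*−W)`
and `R` the associated Bell operator, if `y` is a unit vector in the range of
`(VV*)(WW*)` then `R²y = 2y`. -/
theorem stmt2 {H : Type*} [NormedAddCommGroup H] [InnerProductSpace ℂ H] [CompleteSpace H]
    (V W : H →L[ℂ] H)
    (hVpi : V * adjoint V * V = V) (hWpi : W * adjoint W * W = W)
    (hV2 : V * V = 0) (hW2 : W * W = 0)
    (hc1 : V * W = W * V) (hc2 : V * adjoint W = adjoint W * V)
    (hc3 : adjoint V * W = W * adjoint V) (hc4 : adjoint V * adjoint W = adjoint W * adjoint V)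
    (y : H) (hy : ‖y‖ = 1)
    (hrange : ((V * adjoint V) * (W * adjoint W)) y = y) :
    ((((1 : ℂ)/2) • ((V + adjoint V) * ((W + adjoint W) + Complex.I • (adjoint W - W))
        + (Complex.I • (adjoint V - V)) * ((W + adjoint W) - Complex.I • (adjoint W - W)))) ^ 2) y
      = (2 : ℂ) • y :=
  stmt2_general V W hW2 hc1 hc3 y hrange
end

section
/- For any Bell operator R = (1/2)[A₁(B₁+B₂)+A₂(B₁−B₂)] with Aᵢ ∈ R₁, Bᵢ ∈ R₂ self-adjoint contractions and R₁ ⊆ R₂′, one has ‖R‖ ≤ √2. -/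
open ContinuousLinearMap

/-- Any Bell operator `R = (1/2)[A₁(B₁+B₂)+A₂(B₁−B₂)]`, with
`Aᵢ ∈ R₁`, `Bᵢ ∈ R₂` self-adjoint contractions and `R₁ ⊆ R₂′`, satisfies
`‖R‖ ≤ √2`. -/
theorem stmt15 {H : Type*} [NormedAddCommGroup H] [InnerProductSpace ℂ H] [CompleteSpace H]
    (R₁ R₂ : VonNeumannAlgebra H) (hR : R₁ ≤ R₂.commutant)
    (A₁ A₂ B₁ B₂ : H →L[ℂ] H)
    (hA₁ : A₁ ∈ R₁) (hA₂ : A₂ ∈ R₁) (hB₁ : B₁ ∈ R₂) (hB₂ : B₂ ∈ R₂)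
    (hA₁sa : adjoint A₁ = A₁) (hA₂sa : adjoint A₂ = A₂)
    (hB₁sa : adjoint B₁ = B₁) (hB₂sa : adjoint B₂ = B₂)
    (hA₁c : ‖A₁‖ ≤ 1) (hA₂c : ‖A₂‖ ≤ 1) (hB₁c : ‖B₁‖ ≤ 1) (hB₂c : ‖B₂‖ ≤ 1) :
    ‖((1 : ℂ)/2) • (A₁ * (B₁ + B₂) + A₂ * (B₁ - B₂))‖ ≤ Real.sqrt 2 := by
  have hs : Real.sqrt 2 ^ 2 = 2 := Real.sq_sqrt (by norm_num)
  have hs0 : (0:ℝ) ≤ Real.sqrt 2 := Real.sqrt_nonneg 2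
  have hS : ‖A₁ * (B₁ + B₂) + A₂ * (B₁ - B₂)‖ ≤ 2 * Real.sqrt 2 := by
    apply opNorm_le_bound _ (by positivity)
    intro x
    have key : ‖(B₁ + B₂) x‖ ^ 2 + ‖(B₁ - B₂) x‖ ^ 2 ≤ 4 * ‖x‖ ^ 2 := by
      have hpar := parallelogram_law_with_norm ℂ (B₁ x) (B₂ x)
      have h1 : ‖B₁ x‖ ≤ ‖x‖ := le_trans (B₁.le_opNorm x)
        (by nlinarith [norm_nonneg x])
      have h2 : ‖B₂ x‖ ≤ ‖x‖ := le_trans (B₂.le_opNorm x)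
        (by nlinarith [norm_nonneg x])
      have e1 : (B₁ + B₂) x = B₁ x + B₂ x := rfl
      have e2 : (B₁ - B₂) x = B₁ x - B₂ x := rfl
      rw [e1, e2]
      nlinarith [norm_nonneg (B₁ x), norm_nonneg (B₂ x), norm_nonneg x]
    have h1 : ‖(A₁ * (B₁ + B₂) + A₂ * (B₁ - B₂)) x‖
        ≤ ‖(B₁ + B₂) x‖ + ‖(B₁ - B₂) x‖ := by
      have e : (A₁ * (B₁ + B₂) + A₂ * (B₁ - B₂)) x
          = A₁ ((B₁ + B₂) x) + A₂ ((B₁ - B₂) x) := rfl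
      rw [e]
      refine le_trans (norm_add_le _ _) (add_le_add ?_ ?_)
      · exact le_trans (A₁.le_opNorm _) (by nlinarith [norm_nonneg ((B₁ + B₂) x)])
      · exact le_trans (A₂.le_opNorm _) (by nlinarith [norm_nonneg ((B₁ - B₂) x)])
    refine le_trans h1 ?_
    nlinarith [norm_nonneg ((B₁ + B₂) x), norm_nonneg ((B₁ - B₂) x), norm_nonneg x,
      sq_nonneg (‖(B₁ + B₂) x‖ - ‖(B₁ - B₂) x‖),
      sq_nonneg (‖(B₁ + B₂) x‖ + ‖(B₁ - B₂) x‖ - 2 * Real.sqrt 2 * ‖x‖),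
      mul_nonneg hs0 (norm_nonneg x)]
  have hnorm : ‖((1 : ℂ)/2)‖ = 1/2 := by norm_num
  rw [norm_smul, hnorm]
  linarith
end
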